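/- arXiv:2007.07494 — 4 statements merged into one kernel-verified Lean document; each statement's English description precedes it below -/
import Mathlib

section
/- Let X be a random vector taking finitely many values in ℝ^m, let a, b be two points in ℝ^m, and let v ∈ ℝ^m. Then v^T·Cov(X)·v ≥ P[X = a]·P[X = b]·⟨v, a − b⟩². -/
open Finset

/-- The minimum over `c` of the right side is
`α₁ α₂ / (α₁ + α₂) · (x₁ - x₂)²`, which is at least `α₁ α₂ (x₁ - x₂)²` once `α₁ + α₂ ≤ 1`. -/
theorem mul_mul_sub_sq_le_of_add_le_one {α₁ α₂ : ℝ} (h₁ : 0 ≤ α₁) (h₂ : 0 ≤ α₂)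
    (h : α₁ + α₂ ≤ 1) (x₁ x₂ c : ℝ) :
    α₁ * α₂ * (x₁ - x₂) ^ 2 ≤ α₁ * (x₁ - c) ^ 2 + α₂ * (x₂ - c) ^ 2 := by
  nlinarith [sq_nonneg (α₁ * (x₁ - c) + α₂ * (x₂ - c)),
    mul_nonneg h₁ (sq_nonneg (x₁ - c)), mul_nonneg h₂ (sq_nonneg (x₂ - c))]

theorem sum_ite_eq_mul_add_sum_ite_eq_mul_le {Ω α : Type*} [Fintype Ω] [DecidableEq α]
    (P : Ω → ℝ) (hP : ∀ ω, 0 ≤ P ω) (X : Ω → α) (h : α → ℝ) (hh : ∀ x, 0 ≤ h x)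
    {a b : α} (hab : a ≠ b) :
    (∑ ω, if X ω = a then P ω else 0) * h a + (∑ ω, if X ω = b then P ω else 0) * h b ≤
      ∑ ω, P ω * h (X ω) := by
  rw [sum_mul, sum_mul, ← sum_add_distrib]
  refine sum_le_sum fun ω _ => ?_
  by_cases ha : X ω = a
  · simp [ha, hab]
  · by_cases hb : X ω = b
    · simp [hb, Ne.symm hab]
    · simpa [ha, hb] using mul_nonneg (hP ω) (hh (X ω))

theorem mul_mul_sub_sq_le_sum_mul_sub_sq {Ω α : Type*} [Fintype Ω] [DecidableEq α]
    (P : Ω → ℝ) (hP : ∀ ω, 0 ≤ P ω) (hsum : ∑ ω, P ω ≤ 1) (X : Ω → α) (g : α → ℝ)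
    (a b : α) (c : ℝ) :
    (∑ ω, if X ω = a then P ω else 0) * (∑ ω, if X ω = b then P ω else 0) *
        (g a - g b) ^ 2 ≤ ∑ ω, P ω * (g (X ω) - c) ^ 2 := by
  by_cases hab : a = b
  · subst hab
    simpa using sum_nonneg fun ω _ => mul_nonneg (hP ω) (sq_nonneg (g (X ω) - c))
  have hpa : 0 ≤ ∑ ω, if X ω = a then P ω else 0 :=
    sum_nonneg fun ω _ => by split_ifs <;> simp [hP ω]
  have hpb : 0 ≤ ∑ ω, if X ω = b then P ω else 0 :=
    sum_nonneg fun ω _ => by split_ifs <;> simp [hP ω]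
  have hmass := sum_ite_eq_mul_add_sum_ite_eq_mul_le P hP X (fun _ => 1) (fun _ => zero_le_one) hab
  simp only [mul_one] at hmass
  calc _ ≤ _ := mul_mul_sub_sq_le_of_add_le_one hpa hpb (hmass.trans hsum) (g a) (g b) c
    _ ≤ _ := sum_ite_eq_mul_add_sum_ite_eq_mul_le P hP X (fun x => (g x - c) ^ 2)
        (fun x => sq_nonneg _) hab

open Classical in
theorem stmt_5 {m : ℕ} {Ω : Type*} [Fintype Ω] (P : Ω → ℝ) (hP : ∀ ω, 0 ≤ P ω)
    (hsum : ∑ ω, P ω = 1) (X : Ω → Fin m → ℝ) (a b v : Fin m → ℝ) :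
    ∑ ω, P ω * ((∑ i, v i * X ω i) - ∑ ω', P ω' * ∑ i, v i * X ω' i) ^ 2 ≥
      (∑ ω, if X ω = a then P ω else 0) * (∑ ω, if X ω = b then P ω else 0) *
        (∑ i, v i * (a i - b i)) ^ 2 := by
  have hlin : ∑ i, v i * (a i - b i) = (∑ i, v i * a i) - ∑ i, v i * b i := by
    simp only [mul_sub, sum_sub_distrib]
  rw [hlin]
  exact mul_mul_sub_sq_le_sum_mul_sub_sq P hP hsum.le X (fun x => ∑ i, v i * x i) a b _
end

section
/- Let Ω be a finite set of size q ≥ 1, let k ≥ 1, and let ν be a probability distribution on Ω^k satisfying the balance condition: for every probability distribution μ on Ω, ∑_{σ∈Ω^k} ν(σ)·∏_{i=1}^k μ(σ_i) ≤ q^{−k}. Then for every probability distribution p on Ω^k, KL(p‖ν) ≥ k·KL(p̄‖u), where p̄(ω) = (1/k)·∑_{i=1}^k ∑_{σ∈Ω^k} p(σ)·1{σ_i = ω} is the average marginal of p and u is the uniform distribution on Ω. -/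
/-!
Tilt `ν` by the product weights `∏ i, q * p̄ (σ i)`: the balance condition at `μ = p̄` says the
tilted measure `m σ = ν σ * ∏ i, q * p̄ (σ i)` has total mass at most `1`, so Gibbs' inequality
`∑ p log (m / ν) ≤ ∑ p log (p / ν)` holds. Since `log m - log ν` is additive over coordinates, the
left side is `∑ σ, p σ * ∑ i, log (q * p̄ (σ i)) = k * ∑ ω, p̄ ω * log (q * p̄ ω) = k * KL(p̄ ‖ u)`.
-/

open Finset Real

lemma mul_log_le_mul_log_div_add_sub {a b c : ℝ} (ha : 0 ≤ a) (hb : 0 ≤ b) (hc : 0 ≤ c)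
    (hab : b = 0 → a = 0) (hac : c = 0 → a = 0) :
    a * log c ≤ a * log (a / b) + (b * c - a) := by
  rcases ha.eq_or_lt with rfl | ha
  · simpa using mul_nonneg hb hc
  have hb : 0 < b := hb.lt_of_ne' fun h => ha.ne' (hab h)
  have hc : 0 < c := hc.lt_of_ne' fun h => ha.ne' (hac h)
  have hlog : log (b * c / a) ≤ b * c / a - 1 := log_le_sub_one_of_pos (by positivity)
  rw [log_div (by positivity) ha.ne', log_mul hb.ne' hc.ne'] at hlog
  rw [log_div ha.ne' hb.ne']
  have key : a * (log b + log c - log a) ≤ b * c - a :=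
    calc a * (log b + log c - log a) ≤ a * (b * c / a - 1) := mul_le_mul_of_nonneg_left hlog ha.le
      _ = b * c - a := by field_simp
  linear_combination key

lemma sum_mul_log_le_sum_mul_log_div_of_sum_mul_le {α : Type*} [Fintype α] {p ν f : α → ℝ}
    (hp : ∀ x, 0 ≤ p x) (hν : ∀ x, 0 ≤ ν x) (hf : ∀ x, 0 ≤ f x)
    (hpν : ∀ x, ν x = 0 → p x = 0) (hpf : ∀ x, f x = 0 → p x = 0)
    (hsum : ∑ x, ν x * f x ≤ ∑ x, p x) :
    ∑ x, p x * log (f x) ≤ ∑ x, p x * log (p x / ν x) :=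
  calc ∑ x, p x * log (f x)
      ≤ ∑ x, (p x * log (p x / ν x) + (ν x * f x - p x)) :=
        sum_le_sum fun x _ => mul_log_le_mul_log_div_add_sub (hp x) (hν x) (hf x) (hpν x) (hpf x)
    _ = ∑ x, p x * log (p x / ν x) + (∑ x, ν x * f x - ∑ x, p x) := by
        rw [sum_add_distrib, sum_sub_distrib]
    _ ≤ ∑ x, p x * log (p x / ν x) := by linarith

lemma sum_mul_prod_mul_le_one_of_le_zpow {Ω : Type*} [Fintype Ω] {k : ℕ} {q : ℝ} (hq : 0 < q)
    (ν : (Fin k → Ω) → ℝ) (μ : Ω → ℝ)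
    (hbal : ∑ σ, ν σ * ∏ i, μ (σ i) ≤ q ^ (-(k : ℤ))) :
    ∑ σ, ν σ * ∏ i, q * μ (σ i) ≤ 1 := by
  have hfactor : ∑ σ, ν σ * ∏ i, q * μ (σ i) = q ^ k * ∑ σ, ν σ * ∏ i, μ (σ i) := by
    simp only [prod_mul_distrib, prod_const, card_univ, Fintype.card_fin, mul_sum]
    exact sum_congr rfl fun σ _ => by ring
  calc ∑ σ, ν σ * ∏ i, q * μ (σ i) ≤ q ^ k * q ^ (-(k : ℤ)) := by
        rw [hfactor]; exact mul_le_mul_of_nonneg_left hbal (by positivity)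
    _ = 1 := by rw [zpow_neg, zpow_natCast, mul_inv_cancel₀ (by positivity)]

section AverageMarginal

variable {Ω : Type*} [Fintype Ω] [DecidableEq Ω] {k : ℕ} {p : (Fin k → Ω) → ℝ}

noncomputable def avgMarginal (p : (Fin k → Ω) → ℝ) (ω : Ω) : ℝ :=
  (1 / (k : ℝ)) * ∑ i : Fin k, ∑ σ, p σ * (if σ i = ω then 1 else 0)

lemma natCast_mul_avgMarginal (p : (Fin k → Ω) → ℝ) (ω : Ω) :
    (k : ℝ) * avgMarginal p ω = ∑ i : Fin k, ∑ σ, p σ * (if σ i = ω then 1 else 0) := by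
  rcases Nat.eq_zero_or_pos k with rfl | hk
  · simp
  · rw [avgMarginal, ← mul_assoc, mul_one_div_cancel (by positivity), one_mul]

lemma avgMarginal_nonneg (hp : ∀ σ, 0 ≤ p σ) (ω : Ω) : 0 ≤ avgMarginal p ω :=
  mul_nonneg (by positivity) <| sum_nonneg fun i _ => sum_nonneg fun σ _ =>
    mul_nonneg (hp σ) (by positivity)

lemma sum_mul_sum_apply_eq (p : (Fin k → Ω) → ℝ) (g : Ω → ℝ) :
    ∑ σ, p σ * ∑ i, g (σ i) = k * ∑ ω, avgMarginal p ω * g ω := by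
  simp only [mul_sum, ← mul_assoc, natCast_mul_avgMarginal, sum_mul]
  conv_rhs => rw [Finset.sum_comm]; enter [2, i]; rw [Finset.sum_comm]
  rw [Finset.sum_comm]
  refine sum_congr rfl fun i _ => sum_congr rfl fun σ _ => ?_
  simp

lemma sum_avgMarginal (hk : k ≠ 0) (hpsum : ∑ σ, p σ = 1) : ∑ ω, avgMarginal p ω = 1 := by
  have := sum_mul_sum_apply_eq p (fun _ => (1 : ℝ))
  simpa [← sum_mul, hpsum, hk] using this.symm

lemma avgMarginal_pos (hp : ∀ σ, 0 ≤ p σ) {σ : Fin k → Ω} (hσ : 0 < p σ) (i : Fin k) :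
    0 < avgMarginal p (σ i) := by
  have hk : (0 : ℝ) < k := by exact_mod_cast i.pos
  refine pos_of_mul_pos_right ?_ hk.le
  rw [natCast_mul_avgMarginal]
  have hterm : ∀ j σ', 0 ≤ p σ' * (if σ' j = σ i then 1 else 0) := fun j σ' =>
    mul_nonneg (hp σ') (by positivity)
  calc 0 < p σ := hσ
    _ ≤ ∑ σ', p σ' * (if σ' i = σ i then 1 else 0) := by
      simpa using single_le_sum (fun σ' _ => hterm i σ') (mem_univ σ)
    _ ≤ ∑ j, ∑ σ', p σ' * (if σ' j = σ i then 1 else 0) :=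
      single_le_sum (fun j _ => sum_nonneg fun σ' _ => hterm j σ') (mem_univ i)

end AverageMarginal

open Classical in
theorem stmt_11_general {Ω : Type*} [Fintype Ω] (q k : ℕ) (hq : 1 ≤ q) (hk : 1 ≤ k)
    (ν : (Fin k → Ω) → ℝ) (hν : ∀ σ, 0 ≤ ν σ)
    (hbal : ∀ μ : Ω → ℝ, (∀ ω, 0 ≤ μ ω) → ∑ ω, μ ω = 1 →
      ∑ σ, ν σ * ∏ i, μ (σ i) ≤ (q : ℝ) ^ (-(k : ℤ)))
    (p : (Fin k → Ω) → ℝ) (hp : ∀ σ, 0 ≤ p σ) (hpsum : ∑ σ, p σ = 1) :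
    let pbar := fun ω : Ω =>
      (1 / (k : ℝ)) * ∑ i : Fin k, ∑ σ, p σ * (if σ i = ω then 1 else 0)
    (((k : ℝ) * ∑ ω, pbar ω * Real.log (pbar ω / (1 / q)) : ℝ) : EReal) ≤
      (if ∀ σ, ν σ = 0 → p σ = 0
        then ((∑ σ, p σ * Real.log (p σ / ν σ) : ℝ) : EReal)
        else (⊤ : EReal)) := by
  change ((k * ∑ ω, avgMarginal p ω * log (avgMarginal p ω / (1 / q)) : ℝ) : EReal) ≤ _
  split_ifs with hac
  swap
  · exact le_top
  rw [EReal.coe_le_coe_iff]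
  have hqpos : (0 : ℝ) < q := by exact_mod_cast hq
  have htilt := sum_mul_prod_mul_le_one_of_le_zpow hqpos ν (avgMarginal p)
    (hbal _ (avgMarginal_nonneg hp) (sum_avgMarginal (by omega) hpsum))
  have hfactor_pos : ∀ σ, 0 < p σ → ∀ i, 0 < q * avgMarginal p (σ i) := fun σ hσ i =>
    mul_pos hqpos (avgMarginal_pos hp hσ i)
  have hlog_prod : ∀ σ, p σ * log (∏ i, q * avgMarginal p (σ i))
      = p σ * ∑ i, log (q * avgMarginal p (σ i)) := fun σ => by
    rcases (hp σ).eq_or_lt with h0 | hσ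
    · simp [← h0]
    · rw [log_prod fun i _ => (hfactor_pos σ hσ i).ne']
  calc (k : ℝ) * ∑ ω, avgMarginal p ω * log (avgMarginal p ω / (1 / q))
      = ∑ σ, p σ * log (∏ i, q * avgMarginal p (σ i)) := by
        rw [sum_congr rfl fun σ _ => hlog_prod σ,
          sum_mul_sum_apply_eq p fun ω => log (q * avgMarginal p ω)]
        exact congrArg _ <| sum_congr rfl fun ω _ => by
          rw [one_div, div_inv_eq_mul, mul_comm _ (q : ℝ)]
    _ ≤ ∑ σ, p σ * log (p σ / ν σ) :=
        sum_mul_log_le_sum_mul_log_div_of_sum_mul_le hp hν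
          (fun σ => prod_nonneg fun i _ => mul_nonneg hqpos.le (avgMarginal_nonneg hp _)) hac
          (fun σ h0 => by_contra fun hne =>
            (prod_pos fun i _ => hfactor_pos σ ((hp σ).lt_of_ne' hne) i).ne' h0)
          (htilt.trans hpsum.ge)

open Classical in
theorem stmt_11 {Ω : Type*} [Fintype Ω] (q k : ℕ) (hq : 1 ≤ q) (hk : 1 ≤ k)
    (hcard : Fintype.card Ω = q)
    (ν : (Fin k → Ω) → ℝ) (hν : ∀ σ, 0 ≤ ν σ) (hνsum : ∑ σ, ν σ = 1)
    (hbal : ∀ μ : Ω → ℝ, (∀ ω, 0 ≤ μ ω) → ∑ ω, μ ω = 1 →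
      ∑ σ, ν σ * ∏ i, μ (σ i) ≤ (q : ℝ) ^ (-(k : ℤ)))
    (p : (Fin k → Ω) → ℝ) (hp : ∀ σ, 0 ≤ p σ) (hpsum : ∑ σ, p σ = 1) :
    let pbar := fun ω : Ω =>
      (1 / (k : ℝ)) * ∑ i : Fin k, ∑ σ, p σ * (if σ i = ω then 1 else 0)
    (((k : ℝ) * ∑ ω, pbar ω * Real.log (pbar ω / (1 / q)) : ℝ) : EReal) ≤
      (if ∀ σ, ν σ = 0 → p σ = 0
        then ((∑ σ, p σ * Real.log (p σ / ν σ) : ℝ) : EReal)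
        else (⊤ : EReal)) :=
  stmt_11_general q k hq hk ν hν hbal p hp hpsum
end

section
/- Let Ω be a finite set of size q ≥ 2, let d ≥ 1, and let μ be a probability distribution on Ω^d such that μ(ω,ω,…,ω) > 0 for every constant string (ω,…,ω) with ω ∈ Ω. For a fully supported probability distribution π on Ω define the tilt μ_π(σ) = μ(σ)·∏_{h=1}^d π(σ_h)/Z_π, Z_π = ∑_τ μ(τ)∏_h π(τ_h). If π and π′ are fully supported and μ_π = μ_{π′}, then π = π′. -/
/-!
Evaluating the tilts at a constant string `(ω, …, ω)` cancels `μ(ω, …, ω) > 0` and leaves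
`π ω ^ d / Z_π = π' ω ^ d / Z_π'`. Hence `(π ω * π' ω₀) ^ d = (π ω₀ * π' ω) ^ d`, and taking
`d`-th roots of these positive numbers shows that `π` and `π'` are proportional; since both are
normalized, they are equal.
-/

open Finset

section Tilt

variable {Ω : Type*} [Fintype Ω] {d : ℕ}

def partitionFn (μ : (Fin d → Ω) → ℝ) (π : Ω → ℝ) : ℝ :=
  ∑ τ, μ τ * ∏ h, π (τ h)

noncomputable def tilt (μ : (Fin d → Ω) → ℝ) (π : Ω → ℝ) (σ : Fin d → Ω) : ℝ :=
  μ σ * (∏ h, π (σ h)) / partitionFn μ π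

variable {μ : (Fin d → Ω) → ℝ} {π π' : Ω → ℝ}

lemma partitionFn_pos (hμ : ∀ σ, 0 ≤ μ σ) {ω : Ω} (hω : 0 < μ (fun _ => ω))
    (hπ : ∀ ω, 0 < π ω) : 0 < partitionFn μ π :=
  sum_pos' (fun τ _ => mul_nonneg (hμ τ) (prod_nonneg fun _ _ => (hπ _).le))
    ⟨fun _ => ω, mem_univ _, mul_pos hω (prod_pos fun _ _ => hπ _)⟩

lemma tilt_const (μ : (Fin d → Ω) → ℝ) (π : Ω → ℝ) (ω : Ω) :
    tilt μ π (fun _ => ω) = μ (fun _ => ω) * π ω ^ d / partitionFn μ π := by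
  simp [tilt, prod_const]

lemma pow_mul_partitionFn_eq_of_tilt_eq (heq : tilt μ π = tilt μ π') {ω : Ω}
    (hω : 0 < μ (fun _ => ω)) (hZ : partitionFn μ π ≠ 0) (hZ' : partitionFn μ π' ≠ 0) :
    π ω ^ d * partitionFn μ π' = π' ω ^ d * partitionFn μ π := by
  have h := congrFun heq (fun _ => ω)
  rw [tilt_const, tilt_const, div_eq_div_iff hZ hZ', mul_assoc, mul_assoc] at h
  linear_combination mul_left_cancel₀ hω.ne' h

lemma pow_mul_eq_pow_mul_of_tilt_eq (hμ : ∀ σ, 0 ≤ μ σ)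
    (hconst : ∀ ω : Ω, 0 < μ (fun _ => ω)) (hπ : ∀ ω, 0 < π ω) (hπ' : ∀ ω, 0 < π' ω)
    (heq : tilt μ π = tilt μ π') (i j : Ω) :
    (π i * π' j) ^ d = (π j * π' i) ^ d := by
  have hZ := (partitionFn_pos hμ (hconst i) hπ).ne'
  have hZ' := (partitionFn_pos hμ (hconst i) hπ').ne'
  have hi := pow_mul_partitionFn_eq_of_tilt_eq heq (hconst i) hZ hZ'
  have hj := pow_mul_partitionFn_eq_of_tilt_eq heq (hconst j) hZ hZ'
  refine mul_right_cancel₀ hZ' ?_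
  rw [mul_pow, mul_pow]
  linear_combination π' j ^ d * hi - π' i ^ d * hj

end Tilt

lemma eq_of_sum_eq_of_mul_eq_mul {ι : Type*} [Fintype ι] {f g : ι → ℝ}
    (hsum : ∑ i, f i = ∑ i, g i) (hsum0 : ∑ i, g i ≠ 0) (hcross : ∀ i j, f i * g j = f j * g i) :
    f = g := by
  funext j
  have h : (∑ i, f i) * g j = f j * ∑ i, g i := by
    rw [sum_mul, mul_sum]
    exact sum_congr rfl fun i _ => hcross i j
  rw [hsum] at h
  exact mul_right_cancel₀ hsum0 (by rw [← h, mul_comm])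

theorem stmt_14_general {Ω : Type*} [Fintype Ω] (d : ℕ) (hd : 1 ≤ d)
    (μ : (Fin d → Ω) → ℝ) (hμ : ∀ σ, 0 ≤ μ σ)
    (hconst : ∀ ω : Ω, 0 < μ (fun _ => ω))
    (π π' : Ω → ℝ) (hπ : ∀ ω, 0 < π ω) (hπsum : ∑ ω, π ω = 1)
    (hπ' : ∀ ω, 0 < π' ω) (hπ'sum : ∑ ω, π' ω = 1)
    (heq : (fun σ : Fin d → Ω => μ σ * (∏ h, π (σ h)) / ∑ τ, μ τ * ∏ h, π (τ h)) =
      (fun σ : Fin d → Ω => μ σ * (∏ h, π' (σ h)) / ∑ τ, μ τ * ∏ h, π' (τ h))) :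
    π = π' := by
  have htilt : tilt μ π = tilt μ π' := heq
  refine eq_of_sum_eq_of_mul_eq_mul (hπsum.trans hπ'sum.symm) (by simp [hπ'sum]) fun i j => ?_
  exact (pow_left_inj₀ (mul_pos (hπ i) (hπ' j)).le (mul_pos (hπ j) (hπ' i)).le
    (by omega)).mp (pow_mul_eq_pow_mul_of_tilt_eq hμ hconst hπ hπ' htilt i j)

theorem stmt_14 {Ω : Type*} [Fintype Ω] (q d : ℕ) (hq : 2 ≤ q) (hd : 1 ≤ d)
    (hcard : Fintype.card Ω = q)
    (μ : (Fin d → Ω) → ℝ) (hμ : ∀ σ, 0 ≤ μ σ) (hμsum : ∑ σ, μ σ = 1)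
    (hconst : ∀ ω : Ω, 0 < μ (fun _ => ω))
    (π π' : Ω → ℝ) (hπ : ∀ ω, 0 < π ω) (hπsum : ∑ ω, π ω = 1)
    (hπ' : ∀ ω, 0 < π' ω) (hπ'sum : ∑ ω, π' ω = 1)
    (heq : (fun σ : Fin d → Ω => μ σ * (∏ h, π (σ h)) / ∑ τ, μ τ * ∏ h, π (τ h)) =
      (fun σ : Fin d → Ω => μ σ * (∏ h, π' (σ h)) / ∑ τ, μ τ * ∏ h, π' (τ h))) :
    π = π' :=
  stmt_14_general d hd μ hμ hconst π π' hπ hπsum hπ' hπ'sum heq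
end

section
/- Let F : [0,1] × [0,1] → ℝ be a measurable function with |F(s,x)| ≤ 1 for all s, x. Suppose that for (Lebesgue) almost every pair (x,y) ∈ [0,1]² one has ∫₀¹ F(s,x)·F(s,y) ds = 0. Then for almost every x ∈ [0,1], ∫₀¹ F(s,x)² ds = 0, i.e. F(·,x) = 0 in L²([0,1]) for almost every x. -/
/-!
For a finite measure `ν` and a measurable set `t`, Fubini gives
`∫ (∫_t F(s,x) dx)² ds = ∫_{t×t} ∫ F(s,x) F(s,y) ds d(x,y) = 0`, so for almost every `s`
the slice `F(s,·)` has vanishing integral over `t`. Taking `t` in a countable generating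
π-system (rational open intervals) this holds simultaneously for all such `t`, which forces
`F(s,·) = 0` almost everywhere. Exchanging the two almost-everywhere quantifiers gives the claim.
-/

open MeasureTheory

theorem MeasureTheory.Integrable.ae_eq_zero_of_forall_setIntegral_eq_zero_of_isPiSystem
    {X E : Type*} [m : MeasurableSpace X]
    [NormedAddCommGroup E] [NormedSpace ℝ E] [CompleteSpace E]
    {ν : Measure X} {𝒞 : Set (Set X)} (hgen : m = MeasurableSpace.generateFrom 𝒞)
    (hpi : IsPiSystem 𝒞) {f : X → E} (hf : Integrable f ν)
    (hzero : ∀ t ∈ 𝒞, ∫ x in t, f x ∂ν = 0) (huniv : ∫ x, f x ∂ν = 0) :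
    f =ᵐ[ν] 0 := by
  refine hf.ae_eq_of_withDensityᵥ_eq (integrable_zero _ _ _) ?_
  rw [withDensityᵥ_zero]
  refine VectorMeasure.ext_of_generateFrom 𝒞 (fun t ht => ?_) hgen hpi ?_
  · rw [withDensityᵥ_apply hf (hgen ▸ MeasurableSpace.measurableSet_generateFrom ht)]
    exact hzero t ht
  · rw [withDensityᵥ_apply hf MeasurableSet.univ, Measure.restrict_univ]
    exact huniv

section Orthogonal

variable {S X : Type*} [MeasurableSpace S] [MeasurableSpace X] {μ : Measure S} {ν : Measure X}
  [IsFiniteMeasure μ] [IsFiniteMeasure ν] {F : S → X → ℝ} {C : ℝ}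

theorem ae_integral_eq_zero_of_ae_integral_mul_eq_zero
    (hF : Measurable (Function.uncurry F)) (hbd : ∀ s x, |F s x| ≤ C)
    (horth : ∀ᵐ p ∂ν.prod ν, ∫ s, F s p.1 * F s p.2 ∂μ = 0) :
    ∀ᵐ s ∂μ, ∫ x, F s x ∂ν = 0 := by
  set I : S → ℝ := fun s => ∫ x, F s x ∂ν
  have hI_sq : ∀ s, I s ^ 2 = ∫ p, F s p.1 * F s p.2 ∂ν.prod ν := fun s => by
    rw [integral_prod_mul, sq]
  have hprod_int : Integrable (Function.uncurry fun s (p : X × X) => F s p.1 * F s p.2)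
      (μ.prod (ν.prod ν)) := by
    refine Integrable.of_bound ?_ (C * C) (ae_of_all _ fun z => ?_)
    · have hmeas : Measurable fun z : S × X × X => F z.1 z.2.1 * F z.1 z.2.2 :=
        (hF.comp (measurable_fst.prodMk measurable_snd.fst)).mul
          (hF.comp (measurable_fst.prodMk measurable_snd.snd))
      exact hmeas.aestronglyMeasurable
    · rw [Function.uncurry_apply_pair, Real.norm_eq_abs, abs_mul]
      exact mul_le_mul (hbd _ _) (hbd _ _) (abs_nonneg _) ((abs_nonneg _).trans (hbd z.1 z.2.2))
  have hI_int : Integrable (fun s => I s ^ 2) μ := by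
    simp_rw [hI_sq]
    exact hprod_int.integral_prod_left
  have hI_sq_zero : ∫ s, I s ^ 2 ∂μ = 0 := by
    simp_rw [hI_sq]
    rw [integral_integral_swap hprod_int]
    exact integral_eq_zero_of_ae horth
  filter_upwards [(integral_eq_zero_iff_of_nonneg (fun s => sq_nonneg (I s)) hI_int).1 hI_sq_zero]
    with s hs
  exact (pow_eq_zero_iff two_ne_zero).1 hs

theorem ae_ae_eq_zero_of_ae_integral_mul_eq_zero {𝒞 : Set (Set X)} (h𝒞 : 𝒞.Countable)
    (hgen : ‹MeasurableSpace X› = MeasurableSpace.generateFrom 𝒞) (hpi : IsPiSystem 𝒞)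
    (hF : Measurable (Function.uncurry F)) (hbd : ∀ s x, |F s x| ≤ C)
    (horth : ∀ᵐ p ∂ν.prod ν, ∫ s, F s p.1 * F s p.2 ∂μ = 0) :
    ∀ᵐ s ∂μ, F s =ᵐ[ν] 0 := by
  have hsets : ∀ t, MeasurableSet t → ∀ᵐ s ∂μ, ∫ x in t, F s x ∂ν = 0 := fun t _ =>
    ae_integral_eq_zero_of_ae_integral_mul_eq_zero hF hbd
      (by rw [Measure.prod_restrict]; exact ae_restrict_of_ae horth)
  have h𝒞_ae := (ae_ball_iff h𝒞).2 fun t ht =>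
    hsets t (hgen ▸ MeasurableSpace.measurableSet_generateFrom ht)
  filter_upwards [h𝒞_ae, hsets Set.univ MeasurableSet.univ] with s hs huniv
  have hslice_int : Integrable (F s) ν :=
    Integrable.of_bound (hF.comp measurable_prodMk_left).aestronglyMeasurable C
      (ae_of_all _ (hbd s))
  rw [Measure.restrict_univ] at huniv
  exact hslice_int.ae_eq_zero_of_forall_setIntegral_eq_zero_of_isPiSystem hgen hpi hs huniv

end Orthogonal

theorem stmt_18 (F : ℝ → ℝ → ℝ) (hmeas : Measurable (Function.uncurry F))
    (hbd : ∀ s x, |F s x| ≤ 1)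
    (horth : ∀ᵐ p ∂((volume.restrict (Set.Icc (0:ℝ) 1)).prod
        (volume.restrict (Set.Icc (0:ℝ) 1))),
      ∫ s in Set.Icc (0:ℝ) 1, F s p.1 * F s p.2 = 0) :
    ∀ᵐ x ∂(volume.restrict (Set.Icc (0:ℝ) 1)),
      ∫ s in Set.Icc (0:ℝ) 1, (F s x) ^ 2 = 0 := by
  have hcountable : (⋃ (a : ℚ) (b : ℚ) (_ : a < b), {Set.Ioo (a : ℝ) b}).Countable :=
    Set.countable_iUnion fun _ => Set.countable_iUnion fun _ =>
      Set.countable_iUnion fun _ => Set.countable_singleton _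
  have hslices : ∀ᵐ s ∂(volume.restrict (Set.Icc (0:ℝ) 1)),
      F s =ᵐ[volume.restrict (Set.Icc (0:ℝ) 1)] 0 :=
    ae_ae_eq_zero_of_ae_integral_mul_eq_zero hcountable
      (BorelSpace.measurable_eq.trans Real.borel_eq_generateFrom_Ioo_rat) Real.isPiSystem_Ioo_rat
      hmeas hbd horth
  have hcolumns := (Measure.ae_ae_comm (p := fun s x => F s x = 0)
    (measurableSet_eq_fun hmeas measurable_const)).1 hslices
  filter_upwards [hcolumns] with x hx
  exact integral_eq_zero_of_ae (hx.mono fun s hs => by simp [hs])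
end
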